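/- arXiv:1102.3055 — 2 statements merged into one kernel-verified Lean document; each statement's English description precedes it below -/
import Mathlib

section
/- Let G be a finite group with no subgroup of index 2. Suppose that for each i = 1, 2 the group G is generated by elements aᵢ, bᵢ where aᵢ has order exactly 2, bᵢ has order exactly 3, and aᵢbᵢ has order exactly nᵢ; set tᵢ = nᵢ/2 if nᵢ is even and tᵢ = nᵢ if nᵢ is odd. If t₁ and t₂ are coprime and each tᵢ > 3, then G admits an unmixed Beauville structure of type (t₁, t₁, t₁; t₂, t₂, t₂), i.e. one in which a₁, b₁, c₁ all have order t₁ and a₂, b₂, c₂ all have order t₂. -/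
/-!
For `a² = b³ = 1` generating `G`, take `x = (ab)²`, `y = b⁻¹xb`, `z = bxb⁻¹`. Then
`xyz = (xb⁻¹)³ = (aba)³ = 1`, and all three have the order `t` of `(ab)²`.
The subgroup `⟨b, aba⟩` is normalized by `a`, so its index divides `2`; as `G` has no
subgroup of index `2`, it is `G`. It lies in `⟨x, b⟩` because `aba = xb⁻¹`. Conjugation by `b`
permutes `x, y, z`, so `H = ⟨x, y, z⟩` is normal and `G ⧸ H` is generated by the image of `b`:
its order divides `3`. The image of `a` then has order dividing both `2` and `3`, so it is
trivial, hence `b² = (ab)² ≡ 1` and with `b³ = 1` the quotient is trivial.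
Finally, the elements of the two triples have coprime orders `t₁` and `t₂`, so no nontrivial
powers of them can be conjugate.
-/

/-- An unmixed Beauville structure on a group `G`. -/
def IsBeauvilleStructure {G : Type*} [Group G] (a₁ b₁ c₁ a₂ b₂ c₂ : G) : Prop :=
  a₁ * b₁ * c₁ = 1 ∧ a₂ * b₂ * c₂ = 1 ∧
  Subgroup.closure ({a₁, b₁, c₁} : Set G) = ⊤ ∧
  Subgroup.closure ({a₂, b₂, c₂} : Set G) = ⊤ ∧
  (1 : ℚ) / (orderOf a₁ : ℚ) + 1 / (orderOf b₁ : ℚ) + 1 / (orderOf c₁ : ℚ) < 1 ∧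
  (1 : ℚ) / (orderOf a₂ : ℚ) + 1 / (orderOf b₂ : ℚ) + 1 / (orderOf c₂ : ℚ) < 1 ∧
  ∀ x ∈ ({a₁, b₁, c₁} : Set G), ∀ y ∈ ({a₂, b₂, c₂} : Set G),
    ∀ i j : ℤ, IsConj (x ^ i) (y ^ j) → x ^ i = 1

open Subgroup

section

variable {G : Type*} [Group G]

theorem Subgroup.index_dvd_orderOf_of_sup_zpowers_eq_top {K : Subgroup G} [K.Normal] {g : G}
    (h : K ⊔ zpowers g = ⊤) : K.index ∣ orderOf g := by
  rw [← relIndex_top_right, ← h, relIndex_sup_left, ← Nat.card_zpowers]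
  exact relIndex_dvd_card _ _

theorem Subgroup.mem_of_coprime_orderOf_index {H : Subgroup G} [H.Normal] {g : G}
    (h : (orderOf g).Coprime H.index) : g ∈ H := by
  rw [← QuotientGroup.eq_one_iff, ← orderOf_eq_one_iff]
  exact Nat.eq_one_of_dvd_coprimes h (orderOf_map_dvd (QuotientGroup.mk' H) g)
    (H.index_eq_card ▸ _root_.orderOf_dvd_natCard _)

theorem zpow_eq_one_of_isConj_of_coprime {x y : G} (h : (orderOf x).Coprime (orderOf y))
    {i j : ℤ} (hc : IsConj (x ^ i) (y ^ j)) : x ^ i = 1 := by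
  obtain ⟨c, hc⟩ := hc
  rw [← orderOf_eq_one_iff]
  exact Nat.eq_one_of_dvd_coprimes h (orderOf_dvd_of_mem_zpowers (zpow_mem_zpowers x i))
    (hc.orderOf_eq ▸ orderOf_dvd_of_mem_zpowers (zpow_mem_zpowers y j))

theorem orderOf_sq (g : G) :
    orderOf (g ^ 2) = if orderOf g % 2 = 0 then orderOf g / 2 else orderOf g := by
  rw [orderOf_pow' g two_ne_zero]
  split_ifs with h
  · rw [Nat.gcd_eq_right (Nat.dvd_of_mod_eq_zero h)]
  · rw [Nat.coprime_two_right.mpr (Nat.odd_iff.mpr (by omega)), Nat.div_one]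

theorem orderOf_inv_mul_mul (b x : G) : orderOf (b⁻¹ * x * b) = orderOf x :=
  (SemiconjBy.orderOf_eq b⁻¹ (by simp [SemiconjBy, mul_assoc])).symm

theorem orderOf_mul_mul_inv (b x : G) : orderOf (b * x * b⁻¹) = orderOf x :=
  (SemiconjBy.orderOf_eq b (by simp [SemiconjBy, mul_assoc])).symm

theorem one_div_add_one_div_add_one_div_lt_one {t : ℕ} (ht : 3 < t) :
    (1 : ℚ) / t + 1 / t + 1 / t < 1 := by
  rw [← add_div, ← add_div, div_lt_one (by positivity)]
  exact_mod_cast ht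

variable {a b : G}

theorem mul_pow_two_mul_conj_mul_conj_eq_one (ha : a ^ 2 = 1) (hb : b ^ 3 = 1) :
    (a * b) ^ 2 * (b⁻¹ * (a * b) ^ 2 * b) * (b * (a * b) ^ 2 * b⁻¹) = 1 := by
  have ha' : a⁻¹ = a := inv_eq_of_mul_eq_one_right (pow_two a ▸ ha)
  calc (a * b) ^ 2 * (b⁻¹ * (a * b) ^ 2 * b) * (b * (a * b) ^ 2 * b⁻¹)
      = ((a * b) ^ 2 * b⁻¹) ^ 2 * b ^ 3 * ((a * b) ^ 2 * b⁻¹) := by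
        simp only [pow_succ, pow_zero, one_mul, mul_assoc, inv_mul_cancel_left]
    _ = (a * b * a) ^ 3 := by
        rw [hb, mul_one, ← pow_succ, pow_two, mul_assoc (a * b), mul_assoc, mul_inv_cancel_right,
          ← mul_assoc]
    _ = (a * b * a⁻¹) ^ 3 := by rw [ha']
    _ = 1 := by rw [conj_pow, hb, mul_one, mul_inv_cancel]

theorem closure_pair_mul_mul_eq_top (hindex : ∀ H : Subgroup G, H.index ≠ 2) (ha : a ^ 2 = 1)
    (hgen : closure {a, b} = ⊤) : closure {b, a * b * a} = ⊤ := by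
  set M := closure {b, a * b * a}
  have ha' : a⁻¹ = a := inv_eq_of_mul_eq_one_right (pow_two a ▸ ha)
  have hM : M.Normal := by
    refine normalizer_eq_top_iff.mp (top_le_iff.mp ?_)
    rw [← hgen, closure_le, Set.insert_subset_iff, Set.singleton_subset_iff]
    constructor
    · refine normalizer_le_normalizer_closure _ ?_
      have hconj_b : MulAut.conj a b = a * b * a := by rw [MulAut.conj_apply, ha']
      have hconj_aba : MulAut.conj a (a * b * a) = b := by
        rw [MulAut.conj_apply, ha',
          show a * (a * b * a) * a = a ^ 2 * b * a ^ 2 by simp only [pow_two, mul_assoc], ha]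
        group
      rw [mem_normalizer_iff_conj_image_eq, Set.image_pair, hconj_b, hconj_aba, Set.pair_comm]
    · exact le_normalizer (subset_closure (Set.mem_insert b _))
  have hsup : M ⊔ zpowers a = ⊤ := by
    rw [eq_top_iff, ← hgen, closure_le, Set.insert_subset_iff, Set.singleton_subset_iff]
    exact ⟨mem_sup_right (mem_zpowers a),
      mem_sup_left (subset_closure (Set.mem_insert b _))⟩
  have hdvd : M.index ∣ 2 :=
    (M.index_dvd_orderOf_of_sup_zpowers_eq_top hsup).trans (orderOf_dvd_of_pow_eq_one ha)
  rcases (Nat.dvd_prime Nat.prime_two).mp hdvd with h | h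
  · exact index_eq_one.mp h
  · exact absurd h (hindex M)

theorem closure_pow_two_pair_eq_top (hindex : ∀ H : Subgroup G, H.index ≠ 2) (ha : a ^ 2 = 1)
    (hgen : closure {a, b} = ⊤) : closure {(a * b) ^ 2, b} = ⊤ := by
  rw [eq_top_iff, ← closure_pair_mul_mul_eq_top hindex ha hgen, closure_le,
    Set.insert_subset_iff, Set.singleton_subset_iff]
  have hb : b ∈ closure {(a * b) ^ 2, b} := subset_closure (Set.mem_insert_of_mem _ rfl)
  refine ⟨hb, ?_⟩
  rw [show a * b * a = (a * b) ^ 2 * b⁻¹ by simp [pow_two, mul_assoc]]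
  exact mul_mem (subset_closure (Set.mem_insert _ _)) (inv_mem hb)

theorem normal_closure_conj_triple {x : G} (hb : b ^ 3 = 1) (hgen : closure {x, b} = ⊤) :
    (closure {x, b⁻¹ * x * b, b * x * b⁻¹}).Normal := by
  refine normalizer_eq_top_iff.mp (top_le_iff.mp ?_)
  rw [← hgen, closure_le, Set.insert_subset_iff, Set.singleton_subset_iff]
  refine ⟨le_normalizer (subset_closure (Set.mem_insert x _)),
    normalizer_le_normalizer_closure _ ?_⟩
  have hbb : b * b = b⁻¹ := eq_inv_of_mul_eq_one_left (by rw [← pow_three']; exact hb)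
  have hz : MulAut.conj b (b * x * b⁻¹) = b⁻¹ * x * b := by
    rw [MulAut.conj_apply, show b * (b * x * b⁻¹) * b⁻¹ = (b * b) * x * (b * b)⁻¹ by group,
      hbb, inv_inv]
  rw [mem_normalizer_iff_conj_image_eq, Set.image_insert_eq, Set.image_pair, hz]
  simp only [MulAut.conj_apply, mul_assoc, mul_inv_cancel_left, mul_inv_cancel, mul_one]
  ext
  simp only [Set.mem_insert_iff, Set.mem_singleton_iff]
  tauto

theorem closure_pow_two_conj_conj_eq_top (hindex : ∀ H : Subgroup G, H.index ≠ 2)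
    (ha : a ^ 2 = 1) (hb : b ^ 3 = 1) (hgen : closure {a, b} = ⊤) :
    closure {(a * b) ^ 2, b⁻¹ * (a * b) ^ 2 * b, b * (a * b) ^ 2 * b⁻¹} = ⊤ := by
  have hgen' := closure_pow_two_pair_eq_top hindex ha hgen
  set x := (a * b) ^ 2 with hx
  set H := closure {x, b⁻¹ * x * b, b * x * b⁻¹}
  have : H.Normal := normal_closure_conj_triple hb hgen'
  have hxH : x ∈ H := subset_closure (Set.mem_insert x _)
  have hsup : H ⊔ zpowers b = ⊤ := by
    rw [eq_top_iff, ← hgen', closure_le, Set.insert_subset_iff, Set.singleton_subset_iff]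
    exact ⟨mem_sup_left hxH, mem_sup_right (mem_zpowers b)⟩
  have hidx : H.index ∣ 3 :=
    (H.index_dvd_orderOf_of_sup_zpowers_eq_top hsup).trans (orderOf_dvd_of_pow_eq_one hb)
  have haH : a ∈ H := H.mem_of_coprime_orderOf_index <|
    (Nat.coprime_primes Nat.prime_two Nat.prime_three |>.mpr (by decide)).coprime_dvd_left
      (orderOf_dvd_of_pow_eq_one ha) |>.coprime_dvd_right hidx
  have hbH : b ∈ H := by
    rw [← QuotientGroup.eq_one_iff] at haH hxH ⊢
    have hb2 : (b : G ⧸ H) ^ 2 = 1 := by simpa [hx, haH] using hxH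
    have hb3 : (b : G ⧸ H) ^ 3 = 1 := by rw [← QuotientGroup.mk_pow, hb, QuotientGroup.mk_one]
    calc (b : G ⧸ H) = (b : G ⧸ H) ^ 3 * ((b : G ⧸ H) ^ 2)⁻¹ := by group
      _ = 1 := by rw [hb3, hb2, mul_inv_cancel]
  rw [eq_top_iff, ← hgen, closure_le, Set.insert_subset_iff, Set.singleton_subset_iff]
  exact ⟨haH, hbH⟩

theorem exists_generating_triple_orderOf_eq (hindex : ∀ H : Subgroup G, H.index ≠ 2)
    (ha : orderOf a = 2) (hb : orderOf b = 3) (hgen : closure {a, b} = ⊤) :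
    ∃ x y z : G, x * y * z = 1 ∧ closure {x, y, z} = ⊤ ∧
      ∀ w ∈ ({x, y, z} : Set G), orderOf w =
        if orderOf (a * b) % 2 = 0 then orderOf (a * b) / 2 else orderOf (a * b) := by
  have ha2 : a ^ 2 = 1 := ha ▸ pow_orderOf_eq_one a
  have hb3 : b ^ 3 = 1 := hb ▸ pow_orderOf_eq_one b
  refine ⟨_, _, _, mul_pow_two_mul_conj_mul_conj_eq_one ha2 hb3,
    closure_pow_two_conj_conj_eq_top hindex ha2 hb3 hgen, ?_⟩
  rintro w (rfl | rfl | rfl)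
  · exact orderOf_sq _
  · rw [orderOf_inv_mul_mul, orderOf_sq]
  · rw [orderOf_mul_mul_inv, orderOf_sq]

end

theorem beauville_of_two_23n_generations_general {G : Type*} [Group G]
    (hindex : ∀ H : Subgroup G, H.index ≠ 2)
    (a₁ b₁ a₂ b₂ : G) (n₁ n₂ t₁ t₂ : ℕ)
    (ha₁ : orderOf a₁ = 2) (hb₁ : orderOf b₁ = 3) (hab₁ : orderOf (a₁ * b₁) = n₁)
    (hgen₁ : Subgroup.closure ({a₁, b₁} : Set G) = ⊤)
    (ha₂ : orderOf a₂ = 2) (hb₂ : orderOf b₂ = 3) (hab₂ : orderOf (a₂ * b₂) = n₂)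
    (hgen₂ : Subgroup.closure ({a₂, b₂} : Set G) = ⊤)
    (ht₁ : t₁ = if n₁ % 2 = 0 then n₁ / 2 else n₁)
    (ht₂ : t₂ = if n₂ % 2 = 0 then n₂ / 2 else n₂)
    (hcop : Nat.Coprime t₁ t₂) (ht₁3 : 3 < t₁) (ht₂3 : 3 < t₂) :
    ∃ x₁ y₁ z₁ x₂ y₂ z₂ : G, IsBeauvilleStructure x₁ y₁ z₁ x₂ y₂ z₂ ∧
      orderOf x₁ = t₁ ∧ orderOf y₁ = t₁ ∧ orderOf z₁ = t₁ ∧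
      orderOf x₂ = t₂ ∧ orderOf y₂ = t₂ ∧ orderOf z₂ = t₂ := by
  obtain ⟨x₁, y₁, z₁, hxyz₁, hclosure₁, hord₁⟩ :=
    exists_generating_triple_orderOf_eq hindex ha₁ hb₁ hgen₁
  obtain ⟨x₂, y₂, z₂, hxyz₂, hclosure₂, hord₂⟩ :=
    exists_generating_triple_orderOf_eq hindex ha₂ hb₂ hgen₂
  rw [hab₁, ← ht₁] at hord₁
  rw [hab₂, ← ht₂] at hord₂
  obtain ⟨hx₁, hy₁, hz₁⟩ : orderOf x₁ = t₁ ∧ orderOf y₁ = t₁ ∧ orderOf z₁ = t₁ :=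
    ⟨hord₁ x₁ (by simp), hord₁ y₁ (by simp), hord₁ z₁ (by simp)⟩
  obtain ⟨hx₂, hy₂, hz₂⟩ : orderOf x₂ = t₂ ∧ orderOf y₂ = t₂ ∧ orderOf z₂ = t₂ :=
    ⟨hord₂ x₂ (by simp), hord₂ y₂ (by simp), hord₂ z₂ (by simp)⟩
  refine ⟨x₁, y₁, z₁, x₂, y₂, z₂, ⟨hxyz₁, hxyz₂, hclosure₁, hclosure₂, ?_, ?_, ?_⟩,
    hx₁, hy₁, hz₁, hx₂, hy₂, hz₂⟩
  · rw [hx₁, hy₁, hz₁]; exact one_div_add_one_div_add_one_div_lt_one ht₁3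
  · rw [hx₂, hy₂, hz₂]; exact one_div_add_one_div_add_one_div_lt_one ht₂3
  · intro u hu v hv i j hconj
    exact zpow_eq_one_of_isConj_of_coprime (by rwa [hord₁ u hu, hord₂ v hv]) hconj

/-- Corollary 4.2: if a finite group `G` with no subgroup of index 2 is a
smooth quotient of `Δ(2, 3, n₁)` and `Δ(2, 3, n₂)` with associated parameters
`t₁, t₂ > 3` coprime, then `G` admits an unmixed Beauville structure of type
`(t₁, t₁, t₁; t₂, t₂, t₂)`. -/
theorem beauville_of_two_23n_generations {G : Type*} [Group G] [Finite G]
    (hindex : ∀ H : Subgroup G, H.index ≠ 2)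
    (a₁ b₁ a₂ b₂ : G) (n₁ n₂ t₁ t₂ : ℕ)
    (ha₁ : orderOf a₁ = 2) (hb₁ : orderOf b₁ = 3) (hab₁ : orderOf (a₁ * b₁) = n₁)
    (hgen₁ : Subgroup.closure ({a₁, b₁} : Set G) = ⊤)
    (ha₂ : orderOf a₂ = 2) (hb₂ : orderOf b₂ = 3) (hab₂ : orderOf (a₂ * b₂) = n₂)
    (hgen₂ : Subgroup.closure ({a₂, b₂} : Set G) = ⊤)
    (ht₁ : t₁ = if n₁ % 2 = 0 then n₁ / 2 else n₁)
    (ht₂ : t₂ = if n₂ % 2 = 0 then n₂ / 2 else n₂)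
    (hcop : Nat.Coprime t₁ t₂) (ht₁3 : 3 < t₁) (ht₂3 : 3 < t₂) :
    ∃ x₁ y₁ z₁ x₂ y₂ z₂ : G, IsBeauvilleStructure x₁ y₁ z₁ x₂ y₂ z₂ ∧
      orderOf x₁ = t₁ ∧ orderOf y₁ = t₁ ∧ orderOf z₁ = t₁ ∧
      orderOf x₂ = t₂ ∧ orderOf y₂ = t₂ ∧ orderOf z₂ = t₂ :=
  beauville_of_two_23n_generations_general hindex a₁ b₁ a₂ b₂ n₁ n₂ t₁ t₂ ha₁ hb₁ hab₁ hgen₁ ha₂ hb₂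
    hab₂ hgen₂ ht₁ ht₂ hcop ht₁3 ht₂3
end

section
/- Let G be a finite group and p a prime such that the Sylow p-subgroups of G are cyclic. If (a₁,b₁,c₁), (a₂,b₂,c₂) is an unmixed Beauville structure on G, then there do not exist x ∈ {a₁,b₁,c₁} and y ∈ {a₂,b₂,c₂} such that p divides the order of x and p divides the order of y. In particular, G admits no unmixed Beauville structure in which all six elements have order p. -/
/-!
Elements of order `p` generate subgroups of order `p`, each contained in a Sylow `p`-subgroup.
The Sylow `p`-subgroups are conjugate, and a cyclic one has a unique subgroup of order `p`,
so any two subgroups of order `p` are conjugate. Hence if `p` divides the orders of `x` and `y`,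
suitable powers of `x` and `y` of order `p` are conjugate, which an unmixed Beauville
structure forbids.
-/

open Pointwise

theorem IsCyclic.mem_zpowers_of_pow_orderOf_eq_one {α : Type*} [Group α] [Finite α]
    [IsCyclic α] {u w : α} (hw : w ^ orderOf u = 1) : w ∈ Subgroup.zpowers u := by
  classical
  have := Fintype.ofFinite α
  let roots : Finset α := {a | a ^ orderOf u = 1}
  have hsub : (Subgroup.zpowers u : Set α).toFinset ⊆ roots := fun a ha => by
    simp only [roots, Finset.mem_filter, Finset.mem_univ, true_and]
    exact orderOf_dvd_iff_pow_eq_one.mp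
      (orderOf_dvd_of_mem_zpowers (Set.mem_toFinset.mp ha))
  have hcard : roots.card ≤ (Subgroup.zpowers u : Set α).toFinset.card := by
    rw [← Nat.card_eq_card_toFinset]
    exact (IsCyclic.card_pow_eq_one_le (orderOf_pos u)).trans_eq (Nat.card_zpowers u).symm
  rw [← SetLike.mem_coe, ← Set.mem_toFinset, Finset.eq_of_subset_of_card_le hsub hcard]
  simpa [roots] using hw

theorem exists_zpow_isConj_of_orderOf_eq_prime {G : Type*} [Group G] [Finite G] {p : ℕ}
    [Fact p.Prime] (hcyc : ∀ P : Sylow p G, IsCyclic P) {u v : G}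
    (hu : orderOf u = p) (hv : orderOf v = p) : ∃ k : ℤ, IsConj (u ^ k) v := by
  have isPGroup_zpowers {w : G} (hw : orderOf w = p) : IsPGroup p (Subgroup.zpowers w) :=
    IsPGroup.of_card (n := 1) (by rw [Nat.card_zpowers, hw, pow_one])
  obtain ⟨P, huP⟩ := (isPGroup_zpowers hu).exists_le_sylow
  obtain ⟨Q, hvQ⟩ := (isPGroup_zpowers hv).exists_le_sylow
  obtain ⟨g, rfl⟩ := MulAction.exists_smul_eq G Q P
  have hw : MulAut.conj g v ∈ ((g • Q : Sylow p G) : Subgroup G) := by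
    rw [Sylow.coe_subgroup_smul]
    exact Subgroup.smul_mem_pointwise_smul _ _ _ (hvQ (Subgroup.mem_zpowers v))
  have := hcyc (g • Q)
  have hmem := IsCyclic.mem_zpowers_of_pow_orderOf_eq_one
    (u := ⟨u, huP (Subgroup.mem_zpowers u)⟩) (w := ⟨_, hw⟩)
    (Subtype.ext (by simp [hu, ← hv, pow_orderOf_eq_one]))
  obtain ⟨k, hk⟩ := Subgroup.mem_zpowers_iff.mp hmem
  refine ⟨k, ?_⟩
  rw [show u ^ k = MulAut.conj g v from congrArg Subtype.val hk]
  exact (isConj_iff.mpr ⟨g, rfl⟩).symm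

theorem exists_zpow_isConj_ne_one_of_prime_dvd_orderOf {G : Type*} [Group G] [Finite G]
    {p : ℕ} [Fact p.Prime] (hcyc : ∀ P : Sylow p G, IsCyclic P) {x y : G}
    (hx : p ∣ orderOf x) (hy : p ∣ orderOf y) :
    ∃ i j : ℤ, IsConj (x ^ i) (y ^ j) ∧ x ^ i ≠ 1 := by
  have hu := orderOf_pow_orderOf_div (orderOf_pos x).ne' hx
  have hv := orderOf_pow_orderOf_div (orderOf_pos y).ne' hy
  have hv₁ : y ^ (orderOf y / p) ≠ 1 := fun h =>
    (Fact.out : p.Prime).ne_one (by rw [← hv, h, orderOf_one])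
  obtain ⟨k, hk⟩ := exists_zpow_isConj_of_orderOf_eq_prime hcyc hu hv
  have hconj : IsConj (x ^ ((orderOf x / p : ℕ) * k)) (y ^ ((orderOf y / p : ℕ) : ℤ)) := by
    rwa [zpow_mul, zpow_natCast, zpow_natCast]
  refine ⟨_, _, hconj, fun h => hv₁ ?_⟩
  rwa [h, isConj_one_right, zpow_natCast] at hconj

/-- If the Sylow `p`-subgroups of a finite group `G` are cyclic, then no
unmixed Beauville structure on `G` has an element of order divisible by `p` in
each of its two triples; in particular `G` has no unmixed Beauville structure
in which all six elements have order `p`. -/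
theorem no_beauville_p_in_both_triples_of_cyclic_sylow
    {G : Type*} [Group G] [Finite G] (p : ℕ) (hp : p.Prime)
    (hcyc : ∀ P : Sylow p G, IsCyclic (P : Subgroup G)) :
    (∀ a₁ b₁ c₁ a₂ b₂ c₂ : G, IsBeauvilleStructure a₁ b₁ c₁ a₂ b₂ c₂ →
      ¬ ∃ x ∈ ({a₁, b₁, c₁} : Set G), ∃ y ∈ ({a₂, b₂, c₂} : Set G),
        p ∣ orderOf x ∧ p ∣ orderOf y) ∧
    (∀ a₁ b₁ c₁ a₂ b₂ c₂ : G,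
      orderOf a₁ = p → orderOf b₁ = p → orderOf c₁ = p →
      orderOf a₂ = p → orderOf b₂ = p → orderOf c₂ = p →
      ¬ IsBeauvilleStructure a₁ b₁ c₁ a₂ b₂ c₂) := by
  have : Fact p.Prime := ⟨hp⟩
  have no_shared_prime : ∀ a₁ b₁ c₁ a₂ b₂ c₂ : G, IsBeauvilleStructure a₁ b₁ c₁ a₂ b₂ c₂ →
      ¬ ∃ x ∈ ({a₁, b₁, c₁} : Set G), ∃ y ∈ ({a₂, b₂, c₂} : Set G),
        p ∣ orderOf x ∧ p ∣ orderOf y := by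
    rintro a₁ b₁ c₁ a₂ b₂ c₂ hB ⟨x, hx, y, hy, hpx, hpy⟩
    obtain ⟨i, j, hconj, hne⟩ := exists_zpow_isConj_ne_one_of_prime_dvd_orderOf hcyc hpx hpy
    exact hne (hB.2.2.2.2.2.2 x hx y hy i j hconj)
  refine ⟨no_shared_prime, fun a₁ b₁ c₁ a₂ b₂ c₂ ha₁ _ _ ha₂ _ _ hB => ?_⟩
  exact no_shared_prime a₁ b₁ c₁ a₂ b₂ c₂ hB
    ⟨a₁, by simp, a₂, by simp, ha₁ ▸ dvd_rfl, ha₂ ▸ dvd_rfl⟩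
end
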